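/- arXiv:2505.19520 — 2 statements merged into one kernel-verified Lean document; each statement's English description precedes it below -/
import Mathlib

section
/- Let 𝒜 = (R_1,…,R_k) be a geodesic of alike linear orders on L(A) and let B ⊆ A. Then the restricted path 𝒜_B is a geodesic on L(B). -/
/-!
Common definitions for formalizing Condorcet domains.

A linear order on a finite set `A : Finset α` of alternatives is encoded as a
duplicate-free list enumerating the elements of `A` from most preferred (head)
to least preferred (last).
-/

variable {α : Type*}

/-- `l` is a linear order on the finite set `A` of alternatives. -/
def IsLinOrd [DecidableEq α] (A : Finset α) (l : List α) : Prop :=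
  l.Nodup ∧ l.toFinset = A

/-- The restriction of a linear order `l` to the subset `S` of alternatives. -/
def restrictOrd [DecidableEq α] (l : List α) (S : Finset α) : List α :=
  l.filter (fun x => decide (x ∈ S))

/-- The restriction of a domain `D` to the subset `S` of alternatives. -/
def restrictDom [DecidableEq α] (D : Set (List α)) (S : Finset α) : Set (List α) :=
  (fun l => restrictOrd l S) '' D

/-- The never-condition `x N (k+1)`: no linear order in `E` ranks `x` in
position `k+1` (positions are counted from `1`, so `k : Fin 3` is the
zero-based index).  `k = 0` is a never-top condition, `k = 2` a never-bottom
condition. -/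
def NeverCond (E : Set (List α)) (x : α) (k : Fin 3) : Prop :=
  ∀ l ∈ E, l[(k : ℕ)]? ≠ some x

/-- The set of never-conditions (encoded as pairs `(x, k)`) satisfied by a
domain `E` on the triple `T`. -/
def NeverConds (T : Finset α) (E : Set (List α)) : Set (α × Fin 3) :=
  {p | p.1 ∈ T ∧ NeverCond E p.1 p.2}

/-- The set of peak-pit conditions (never-top or never-bottom conditions)
satisfied by a domain `E` on the triple `T`. -/
def PeakPitConds (T : Finset α) (E : Set (List α)) : Set (α × Fin 3) :=
  {p | p.1 ∈ T ∧ (p.2 = 0 ∨ p.2 = 2) ∧ NeverCond E p.1 p.2}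

/-- `D` is a Condorcet domain on `A`: a set of linear orders on `A` whose
restriction to every triple of distinct alternatives satisfies some
never-condition. -/
def IsCondorcetDomain [DecidableEq α] (A : Finset α) (D : Set (List α)) : Prop :=
  (∀ l ∈ D, IsLinOrd A l) ∧
    ∀ a b c : α, a ∈ A → b ∈ A → c ∈ A → a ≠ b → a ≠ c → b ≠ c →
      ∃ x ∈ ({a, b, c} : Finset α), ∃ k : Fin 3,
        NeverCond (restrictDom D {a, b, c}) x k

/-- `D` is a peak-pit Condorcet domain on `A`: a set of linear orders on `A`
whose restriction to every triple of distinct alternatives satisfies a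
never-top or a never-bottom condition. -/
def IsPeakPitDomain [DecidableEq α] (A : Finset α) (D : Set (List α)) : Prop :=
  (∀ l ∈ D, IsLinOrd A l) ∧
    ∀ a b c : α, a ∈ A → b ∈ A → c ∈ A → a ≠ b → a ≠ c → b ≠ c →
      ∃ x ∈ ({a, b, c} : Finset α),
        NeverCond (restrictDom D {a, b, c}) x 0 ∨
          NeverCond (restrictDom D {a, b, c}) x 2

/-- Two linear orders are alike if they differ by a swap of two adjacent
alternatives. -/
def Alike (R T : List α) : Prop :=
  ∃ (l₁ l₂ : List α) (x y : α), x ≠ y ∧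
    R = l₁ ++ x :: y :: l₂ ∧ T = l₁ ++ y :: x :: l₂

/-- `P` is a path of alike linear orders on `L(A)`. -/
def IsPathOn [DecidableEq α] (A : Finset α) (P : List (List α)) : Prop :=
  P ≠ [] ∧ (∀ l ∈ P, IsLinOrd A l) ∧ P.Chain' Alike

/-- `P` is a path of alike linear orders on `L(A)` connecting `R` and `T`. -/
def IsPath [DecidableEq α] (A : Finset α) (P : List (List α)) (R T : List α) : Prop :=
  IsPathOn A P ∧ P.head? = some R ∧ P.getLast? = some T

/-- `P` is a geodesic on `L(A)` connecting `R` and `T`: a path of alike linear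
orders of minimal length among all such paths. -/
def IsGeodesic [DecidableEq α] (A : Finset α) (P : List (List α)) (R T : List α) : Prop :=
  IsPath A P R T ∧ ∀ Q : List (List α), IsPath A Q R T → P.length ≤ Q.length

/-- The switching pair of alternatives between two alike linear orders (as an
unordered pair); `none` if the two lists do not differ. -/
def switchPair? [DecidableEq α] (R T : List α) : Option (Sym2 α) :=
  ((R.zip T).find? (fun p => decide (p.1 ≠ p.2))).map Sym2.mk.uncurry

/-- `S(P)`: the sequence of switching pairs of a path of alike linear orders. -/
def switchSeq [DecidableEq α] (P : List (List α)) : List (Sym2 α) :=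
  (P.zip P.tail).filterMap (fun p => switchPair? p.1 p.2)

/-- The restriction of a path to the subset `B`: restrict every member and
remove consecutive duplicates. -/
def restrictPath [DecidableEq α] (P : List (List α)) (B : Finset α) : List (List α) :=
  (P.map (fun l => restrictOrd l B)).destutter (· ≠ ·)

/-- `D` is connected: any two of its members are joined by a path of alike
linear orders lying entirely in `D`. -/
def ConnectedDomain [DecidableEq α] (A : Finset α) (D : Set (List α)) : Prop :=
  ∀ R ∈ D, ∀ T ∈ D, ∃ P : List (List α), IsPath A P R T ∧ ∀ l ∈ P, l ∈ D

/-- `D` is directly connected: any two of its members are joined by a geodesic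
lying entirely in `D`. -/
def DirectlyConnectedDomain [DecidableEq α] (A : Finset α) (D : Set (List α)) : Prop :=
  ∀ R ∈ D, ∀ T ∈ D, ∃ P : List (List α), IsGeodesic A P R T ∧ ∀ l ∈ P, l ∈ D

/-- Two unordered pairs of alternatives are disjoint. -/
def DisjointPair (p q : Sym2 α) : Prop := ∀ x : α, x ∈ p → x ∉ q

/-- One swap of an adjacent disjoint pair of switching pairs in a sequence of
switching pairs. -/
inductive AdjSwap : List (Sym2 α) → List (Sym2 α) → Prop
  | swap (l₁ l₂ : List (Sym2 α)) (p q : Sym2 α) (h : DisjointPair p q) :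
      AdjSwap (l₁ ++ p :: q :: l₂) (l₁ ++ q :: p :: l₂)

/-- Two paths are equivalent if their sequences of switching pairs differ by a
finite number of swaps of adjacent disjoint pairs of switching pairs. -/
def PathEquiv [DecidableEq α] (P Q : List (List α)) : Prop :=
  Relation.ReflTransGen AdjSwap (switchSeq P) (switchSeq Q)

/-- Two domains are isomorphic if some bijection between the underlying sets of
alternatives maps one domain onto the other (acting position-wise on linear
orders). -/
def DomIsomorphic (A B : Finset α) (D E : Set (List α)) : Prop :=
  ∃ f : α → α, Set.BijOn f ↑A ↑B ∧ E = (fun l => l.map f) '' D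

/-!
The distance between two linear orders in the graph of alike orders is their Kendall tau
distance, the number of pairs they rank differently: an adjacent swap changes it by at most one,
and every order other than `T` has an adjacent pair ranked against `T`, whose swap brings it one
step closer. So every step of a geodesic towards `T` swaps a pair ranked against `T`. Restricted
to `B`, such a step either disappears or swaps a pair ranked against `T` restricted to `B`; hence
the restricted path gets closer to the restriction of `T` at every step, and is no longer than
any path between the restrictions of its ends.
-/

open List

namespace List

section PairSublist

variable {l l₁ l₂ : List α} {a b c x y : α}

theorem pair_sublist_or_pair_sublist (ha : a ∈ l) (hb : b ∈ l) (hab : a ≠ b) :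
    [a, b] <+ l ∨ [b, a] <+ l := by
  induction l <;> grind

theorem Nodup.not_pair_sublist_swap (hl : l.Nodup) (h : [a, b] <+ l) : ¬[b, a] <+ l := by
  induction l <;> grind

theorem Nodup.pair_sublist_trans (hl : l.Nodup) (hab : [a, b] <+ l) (hbc : [b, c] <+ l) :
    [a, c] <+ l := by
  induction l <;> grind

theorem pair_sublist_swap_adjacent (h : [a, b] <+ l₁ ++ x :: y :: l₂)
    (hne : (a, b) ≠ (x, y)) : [a, b] <+ l₁ ++ y :: x :: l₂ := by
  induction l₁ <;> grind

end PairSublist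

section Destutter

variable {β : Type*}

theorem head?_destutter' (R : β → β → Prop) [DecidableRel R] (l : List β) (a : β) :
    (l.destutter' R a).head? = some a := by
  induction l generalizing a with
  | nil => rfl
  | cons b l ih =>
    rw [destutter'_cons]
    split
    · rfl
    · exact ih a

theorem IsChain.length_le_of_apply_lt {g : β → ℕ} {l : List β} {a : β}
    (h : l.IsChain fun u v => g v < g u) (ha : l.head? = some a) : l.length ≤ g a + 1 := by
  induction l generalizing a with
  | nil => simp at ha
  | cons b l ih =>
    obtain rfl : b = a := by simpa using ha
    cases l with
    | nil => simp
    | cons c l =>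
      obtain ⟨hbc, hl⟩ := isChain_cons_cons.1 h
      have := ih hl rfl
      simp only [length_cons] at this ⊢
      omega

variable [DecidableEq β]

theorem getLast?_destutter'_ne (l : List β) (a : β) :
    (l.destutter' (· ≠ ·) a).getLast? = (a :: l).getLast? := by
  induction l generalizing a with
  | nil => rfl
  | cons b l ih =>
    rw [destutter'_cons, getLast?_cons_cons]
    split_ifs with hab
    · simp [getLast?_cons, ih]
    · obtain rfl := not_not.1 hab
      exact ih a

theorem isChain_destutter'_ne {r : β → β → Prop} {l : List β} {a : β}
    (h : (a :: l).IsChain fun u v => u = v ∨ r u v) : (l.destutter' (· ≠ ·) a).IsChain r := by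
  induction l generalizing a with
  | nil => exact isChain_singleton a
  | cons b l ih =>
    obtain ⟨hab, hl⟩ := isChain_cons_cons.1 h
    rw [destutter'_cons]
    split_ifs with hne
    · refine (ih hl).cons fun c hc => ?_
      rw [head?_destutter', Option.mem_some_iff] at hc
      exact hc ▸ hab.resolve_left hne
    · obtain rfl := not_not.1 hne
      exact ih hl

end Destutter

end List

section Swaps

variable {S S' T : List α}

theorem Alike.perm (h : Alike S S') : S.Perm S' := by
  obtain ⟨l₁, l₂, x, y, -, rfl, rfl⟩ := h
  exact (Perm.swap y x l₂).append_left l₁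

def IsSwapToward (T S S' : List α) : Prop :=
  ∃ l₁ l₂ x y, S = l₁ ++ x :: y :: l₂ ∧ S' = l₁ ++ y :: x :: l₂ ∧ [y, x] <+ T

theorem IsSwapToward.alike (h : IsSwapToward T S S') (hT : T.Nodup) : Alike S S' := by
  obtain ⟨l₁, l₂, x, y, rfl, rfl, hyx⟩ := h
  refine ⟨l₁, l₂, x, y, fun hxy => ?_, rfl, rfl⟩
  subst hxy
  exact hT.not_pair_sublist_swap hyx hyx

end Swaps

section LinearOrders

variable [DecidableEq α] {A B : Finset α} {l R S S' T : List α}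

theorem IsLinOrd.mem_iff (hl : IsLinOrd A l) {a : α} : a ∈ l ↔ a ∈ A := by
  rw [← mem_toFinset, hl.2]

theorem IsLinOrd.perm (hR : IsLinOrd A R) (hT : IsLinOrd A T) : R.Perm T :=
  (perm_ext_iff_of_nodup hR.1 hT.1).2 fun _ => hR.mem_iff.trans hT.mem_iff.symm

theorem restrictOrd_isLinOrd (hBA : B ⊆ A) (hl : IsLinOrd A l) :
    IsLinOrd B (restrictOrd l B) := by
  refine ⟨hl.1.filter _, Finset.ext fun a => ?_⟩
  simp only [restrictOrd, mem_toFinset, mem_filter, hl.mem_iff, decide_eq_true_eq]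
  exact ⟨And.right, fun h => ⟨hBA h, h⟩⟩

theorem Alike.isLinOrd (h : Alike S S') (hS : IsLinOrd A S) : IsLinOrd A S' :=
  ⟨h.perm.nodup_iff.1 hS.1, (toFinset_eq_of_perm _ _ h.perm).symm.trans hS.2⟩

section Restriction

variable {l₁ l₂ : List α} {x y : α}

theorem restrictOrd_append_cons_cons (hx : x ∈ B) (hy : y ∈ B) :
    restrictOrd (l₁ ++ x :: y :: l₂) B =
      restrictOrd l₁ B ++ x :: y :: restrictOrd l₂ B := by
  simp [restrictOrd, hx, hy]

theorem restrictOrd_swap_of_notMem (h : ¬(x ∈ B ∧ y ∈ B)) :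
    restrictOrd (l₁ ++ x :: y :: l₂) B = restrictOrd (l₁ ++ y :: x :: l₂) B := by
  by_cases hx : x ∈ B <;> by_cases hy : y ∈ B <;> simp_all [restrictOrd]

theorem Alike.eq_or_alike_restrictOrd (h : Alike S S') (B : Finset α) :
    restrictOrd S B = restrictOrd S' B ∨ Alike (restrictOrd S B) (restrictOrd S' B) := by
  obtain ⟨l₁, l₂, x, y, hxy, rfl, rfl⟩ := h
  by_cases hB : x ∈ B ∧ y ∈ B
  · exact .inr ⟨_, _, x, y, hxy, restrictOrd_append_cons_cons hB.1 hB.2,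
      restrictOrd_append_cons_cons hB.2 hB.1⟩
  · exact .inl (restrictOrd_swap_of_notMem hB)

theorem IsSwapToward.eq_or_isSwapToward_restrictOrd (h : IsSwapToward T S S') (B : Finset α) :
    restrictOrd S B = restrictOrd S' B ∨
      IsSwapToward (restrictOrd T B) (restrictOrd S B) (restrictOrd S' B) := by
  obtain ⟨l₁, l₂, x, y, rfl, rfl, hyx⟩ := h
  by_cases hB : x ∈ B ∧ y ∈ B
  · refine .inr ⟨_, _, x, y, restrictOrd_append_cons_cons hB.1 hB.2,
      restrictOrd_append_cons_cons hB.2 hB.1, ?_⟩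
    simpa [restrictOrd, hB.1, hB.2] using hyx.filter fun a => decide (a ∈ B)
  · exact .inl (restrictOrd_swap_of_notMem hB)

end Restriction

section KendallTau

def discordantPairs (R T : List α) : Finset (α × α) :=
  (R.toFinset ×ˢ R.toFinset).filter fun p => [p.1, p.2] <+ R ∧ [p.2, p.1] <+ T

def kendallTau (R T : List α) : ℕ := (discordantPairs R T).card

theorem mem_discordantPairs {a b : α} :
    (a, b) ∈ discordantPairs R T ↔ [a, b] <+ R ∧ [b, a] <+ T := by
  simp only [discordantPairs, Finset.mem_filter, Finset.mem_product, mem_toFinset,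
    and_iff_right_iff_imp]
  exact fun h => ⟨h.1.subset (by simp), h.1.subset (by simp)⟩

theorem kendallTau_self (hT : T.Nodup) : kendallTau T T = 0 := by
  simp only [kendallTau, Finset.card_eq_zero, Finset.eq_empty_iff_forall_notMem, Prod.forall,
    mem_discordantPairs]
  exact fun _ _ h => hT.not_pair_sublist_swap h.1 h.2

theorem Alike.kendallTau_le (h : Alike S S') (T : List α) :
    kendallTau S T ≤ kendallTau S' T + 1 := by
  obtain ⟨l₁, l₂, x, y, -, rfl, rfl⟩ := h
  calc kendallTau _ T ≤ (insert (x, y) (discordantPairs (l₁ ++ y :: x :: l₂) T)).card := by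
        refine Finset.card_le_card fun ⟨a, b⟩ hab => ?_
        rw [mem_discordantPairs] at hab
        rw [Finset.mem_insert, mem_discordantPairs]
        by_cases hne : (a, b) = (x, y)
        · exact .inl hne
        · exact .inr ⟨pair_sublist_swap_adjacent hab.1 hne, hab.2⟩
    _ ≤ _ := Finset.card_insert_le _ _

theorem Alike.isSwapToward_of_kendallTau_lt (h : Alike S S')
    (hlt : kendallTau S' T < kendallTau S T) : IsSwapToward T S S' := by
  obtain ⟨l₁, l₂, x, y, -, rfl, rfl⟩ := h
  refine ⟨l₁, l₂, x, y, rfl, rfl, ?_⟩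
  by_contra hyx
  refine hlt.not_ge (Finset.card_le_card fun ⟨a, b⟩ hab => ?_)
  rw [mem_discordantPairs] at hab ⊢
  refine ⟨pair_sublist_swap_adjacent hab.1 fun hab' => ?_, hab.2⟩
  obtain ⟨rfl, rfl⟩ := Prod.mk.inj hab'
  exact hyx hab.2

theorem IsSwapToward.kendallTau_lt (h : IsSwapToward T S S') (hS' : S'.Nodup) (hT : T.Nodup) :
    kendallTau S' T < kendallTau S T := by
  obtain ⟨l₁, l₂, x, y, rfl, rfl, hyx⟩ := h
  have hsub : discordantPairs (l₁ ++ y :: x :: l₂) T ⊆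
      discordantPairs (l₁ ++ x :: y :: l₂) T := by
    rintro ⟨a, b⟩ hab
    rw [mem_discordantPairs] at hab ⊢
    refine ⟨pair_sublist_swap_adjacent hab.1 fun hab' => ?_, hab.2⟩
    obtain ⟨rfl, rfl⟩ := Prod.mk.inj hab'
    exact hT.not_pair_sublist_swap hyx hab.2
  refine Finset.card_lt_card ((Finset.ssubset_iff_of_subset hsub).2 ?_)
  refine ⟨(x, y), mem_discordantPairs.2 ⟨by simp, hyx⟩, fun hxy => ?_⟩
  exact hS'.not_pair_sublist_swap (by simp) (mem_discordantPairs.1 hxy).1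

theorem exists_isSwapToward_of_ne (hR : IsLinOrd A R) (hT : IsLinOrd A T) (hne : R ≠ T) :
    ∃ R', IsSwapToward T R R' := by
  by_contra! h
  -- Otherwise `R` is sorted by the ranking of `T`, hence equal to `T`.
  have : Trans (fun a b => [a, b] <+ T) (fun a b => [a, b] <+ T) (fun a b => [a, b] <+ T) :=
    ⟨hT.1.pair_sublist_trans⟩
  have hchain : R.IsChain fun a b => [a, b] <+ T := by
    refine isChain_iff_forall_rel_of_append_cons_cons.2 fun a b l₁ l₂ hR' => ?_
    have hnd : (a :: b :: l₂).Nodup := (hR' ▸ hR.1).sublist (sublist_append_right _ _)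
    have hab : a ≠ b := fun e => (nodup_cons.1 hnd).1 (by simp [e])
    have hmem : ∀ c ∈ a :: b :: l₂, c ∈ T := fun c hc =>
      hT.mem_iff.2 (hR.mem_iff.1 (hR' ▸ mem_append_right _ hc))
    refine (pair_sublist_or_pair_sublist (hmem a (by simp)) (hmem b (by simp)) hab).resolve_right
      fun hba => h _ ⟨l₁, l₂, a, b, hR', rfl, hba⟩
  exact hne ((hR.perm hT).eq_of_pairwise
    (fun _ _ _ _ hab hba => (hT.1.not_pair_sublist_swap hab hba).elim) hchain.pairwise
    (pairwise_of_forall_sublist id))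

end KendallTau

end LinearOrders

section Paths

variable [DecidableEq α] {A B : Finset α} {P : List (List α)} {R S S' T : List α}

theorem isPathOn_iff :
    IsPathOn A P ↔ P ≠ [] ∧ (∀ l ∈ P, IsLinOrd A l) ∧ P.IsChain Alike :=
  Iff.rfl

theorem isPath_singleton_iff : IsPath A [S] R T ↔ R = S ∧ T = S ∧ IsLinOrd A S := by
  simp only [IsPath, isPathOn_iff, mem_singleton, forall_eq, head?_cons, getLast?_singleton,
    Option.some.injEq]
  exact ⟨fun h => ⟨h.2.1.symm, h.2.2.symm, h.1.2.1⟩,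
    fun h => ⟨⟨cons_ne_nil _ _, h.2.2, isChain_singleton S⟩, h.1.symm, h.2.1.symm⟩⟩

theorem isPath_cons_cons_iff {Q : List (List α)} :
    IsPath A (S :: S' :: Q) R T ↔
      R = S ∧ IsLinOrd A S ∧ Alike S S' ∧ IsPath A (S' :: Q) S' T := by
  simp only [IsPath, isPathOn_iff, isChain_cons_cons, mem_cons, forall_eq_or_imp,
    head?_cons, getLast?_cons_cons, Option.some.injEq]
  grind

theorem IsPath.eq_cons (h : IsPath A P R T) : ∃ Q, P = R :: Q := by
  obtain ⟨⟨-, -, -⟩, hR, -⟩ := h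
  cases P with
  | nil => simp at hR
  | cons S Q => exact ⟨Q, by simpa using hR⟩

theorem IsPath.isLinOrd_left (h : IsPath A P R T) : IsLinOrd A R :=
  h.1.2.1 R (mem_of_mem_head? h.2.1)

theorem IsPath.isLinOrd_right (h : IsPath A P R T) : IsLinOrd A T :=
  h.1.2.1 T (mem_of_mem_getLast? h.2.2)

theorem IsPath.kendallTau_lt_length :
    ∀ {P : List (List α)} {R : List α}, IsPath A P R T → kendallTau R T < P.length
  | [], _, h => absurd rfl h.1.1
  | [_], _, h => by
    obtain ⟨rfl, rfl, hS⟩ := isPath_singleton_iff.1 h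
    simp [kendallTau_self hS.1]
  | S :: S' :: Q, _, h => by
    obtain ⟨rfl, -, hSS', h'⟩ := isPath_cons_cons_iff.1 h
    have := h'.kendallTau_lt_length
    have := hSS'.kendallTau_le T
    simp only [length_cons] at *
    omega

theorem exists_isPath_length_le (hR : IsLinOrd A R) (hT : IsLinOrd A T) :
    ∃ P, IsPath A P R T ∧ P.length ≤ kendallTau R T + 1 := by
  induction hn : kendallTau R T using Nat.strong_induction_on generalizing R with
  | _ n ih =>
  by_cases hRT : R = T
  · subst hRT
    exact ⟨[R], isPath_singleton_iff.2 ⟨rfl, rfl, hR⟩, by simp⟩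
  obtain ⟨R', hswap⟩ := exists_isSwapToward_of_ne hR hT hRT
  have hA := hswap.alike hT.1
  have hR' := hA.isLinOrd hR
  have hlt := hswap.kendallTau_lt hR'.1 hT.1
  obtain ⟨P, hP, hlen⟩ := ih _ (hn ▸ hlt) hR' rfl
  obtain ⟨Q, rfl⟩ := hP.eq_cons
  refine ⟨R :: R' :: Q, isPath_cons_cons_iff.2 ⟨rfl, hR, hA, hP⟩, ?_⟩
  simp only [length_cons] at hlen ⊢
  omega

theorem IsGeodesic.length_eq (h : IsGeodesic A P R T) : P.length = kendallTau R T + 1 := by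
  obtain ⟨Q, hQ, hlen⟩ := exists_isPath_length_le h.1.isLinOrd_left h.1.isLinOrd_right
  exact le_antisymm ((h.2 Q hQ).trans hlen) h.1.kendallTau_lt_length

theorem IsPath.isChain_isSwapToward :
    ∀ {P : List (List α)} {R : List α}, IsPath A P R T → P.length = kendallTau R T + 1 →
      P.IsChain (IsSwapToward T)
  | [], _, h, _ => absurd rfl h.1.1
  | [_], _, _, _ => isChain_singleton _
  | S :: S' :: Q, _, h, hlen => by
    obtain ⟨rfl, -, hSS', h'⟩ := isPath_cons_cons_iff.1 h
    have hlt := h'.kendallTau_lt_length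
    have hle := hSS'.kendallTau_le T
    simp only [length_cons] at hlen hlt
    exact isChain_cons_cons.2 ⟨hSS'.isSwapToward_of_kendallTau_lt (by omega),
      h'.isChain_isSwapToward (by simp only [length_cons]; omega)⟩

theorem restrictPath_cons (R : List α) (Q : List (List α)) (B : Finset α) :
    restrictPath (R :: Q) B =
      (Q.map (restrictOrd · B)).destutter' (· ≠ ·) (restrictOrd R B) := by
  rw [restrictPath, map_cons, destutter_cons']

theorem isPath_restrictPath (hBA : B ⊆ A) (h : IsPath A P R T) :
    IsPath B (restrictPath P B) (restrictOrd R B) (restrictOrd T B) := by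
  obtain ⟨Q, rfl⟩ := h.eq_cons
  obtain ⟨⟨-, hlin, hchain⟩, -, hlast⟩ := h
  rw [restrictPath_cons]
  refine ⟨⟨destutter'_ne_nil _ _, fun l hl => ?_, ?_⟩, head?_destutter' .., ?_⟩
  · have hl' : l ∈ (R :: Q).map (restrictOrd · B) := (destutter'_sublist _ _ _).subset hl
    obtain ⟨S, hS, rfl⟩ := mem_map.1 hl'
    exact restrictOrd_isLinOrd hBA (hlin S hS)
  · exact isChain_destutter'_ne
      (isChain_map_of_isChain _ (fun _ _ h => h.eq_or_alike_restrictOrd B) hchain)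
  · rw [getLast?_destutter'_ne]
    change ((R :: Q).map (restrictOrd · B)).getLast? = _
    rw [getLast?_map, hlast]
    rfl

theorem length_restrictPath_le (h : IsPath A P R T) (hswap : P.IsChain (IsSwapToward T)) :
    (restrictPath P B).length ≤ kendallTau (restrictOrd R B) (restrictOrd T B) + 1 := by
  obtain ⟨Q, rfl⟩ := h.eq_cons
  have hrestrict : ((R :: Q).map (restrictOrd · B)).IsChain fun u v =>
      u = v ∨ IsSwapToward (restrictOrd T B) u v :=
    isChain_map_of_isChain _ (fun _ _ h => h.eq_or_isSwapToward_restrictOrd B) hswap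
  have hsteps : ((R :: Q).map (restrictOrd · B)).IsChain fun u v =>
      u = v ∨ kendallTau v (restrictOrd T B) < kendallTau u (restrictOrd T B) := by
    refine hrestrict.imp_of_mem_imp fun u v _ hv huv => huv.imp_right fun h' => ?_
    obtain ⟨S, hS, rfl⟩ := mem_map.1 hv
    exact h'.kendallTau_lt ((h.1.2.1 S hS).1.filter _) (h.isLinOrd_right.1.filter _)
  rw [restrictPath_cons]
  exact (isChain_destutter'_ne hsteps).length_le_of_apply_lt (head?_destutter' ..)

end Paths

/-- The restriction of a geodesic on `L(A)` to a subset `B ⊆ A`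
is a geodesic on `L(B)`. -/
theorem restrictPath_isGeodesic [DecidableEq α] (A B : Finset α) (hBA : B ⊆ A)
    (P : List (List α)) (R T : List α) (hP : IsGeodesic A P R T) :
    IsGeodesic B (restrictPath P B) (restrictOrd R B) (restrictOrd T B) := by
  have hswap := hP.1.isChain_isSwapToward hP.length_eq
  refine ⟨isPath_restrictPath hBA hP.1, fun Q hQ => ?_⟩
  calc (restrictPath P B).length
      ≤ kendallTau (restrictOrd R B) (restrictOrd T B) + 1 := length_restrictPath_le hP.1 hswap
    _ ≤ Q.length := hQ.kendallTau_lt_length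
end

section
/- Let D ⊆ L(A) be a peak-pit Condorcet domain, let a, b, c ∈ A be distinct, and let R, T ∈ D_{{a,b,c}} be linear orders that differ by three swaps of adjacent alternatives (that is, T is the reverse of R). Then there are exactly two geodesics on L({a,b,c}) connecting R and T, and for at least one of these two geodesics 𝒜, the set D_{{a,b,c}} ∪ K(𝒜) is a peak-pit Condorcet domain. -/
/-!
Common definitions for formalizing Condorcet domains.

A linear order on a finite set `A : Finset α` of alternatives is encoded as a
duplicate-free list enumerating the elements of `A` from most preferred (head)
to least preferred (last).
-/

variable {α : Type*}

/-!
On three alternatives the graph of alike linear orders is a hexagon, so `[x, y, z]` and its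
reverse `[z, y, x]` are joined by exactly two geodesics: along one the middle alternative `y`
passes through the top, along the other through the bottom. As both `[x, y, z]` and `[z, y, x]`
lie in `D_{a,b,c}`, its never-top or never-bottom condition can only concern `y`, and adding the
geodesic on which `y` avoids that position preserves it.
-/

section Alike

variable {x y z : α}

theorem Alike.symm {R T : List α} (h : Alike R T) : Alike T R := by
  obtain ⟨l₁, l₂, u, v, huv, rfl, rfl⟩ := h
  exact ⟨l₁, l₂, v, u, huv.symm, rfl, rfl⟩

theorem Alike.perm_s17 {R T : List α} (h : Alike R T) : R.Perm T := by
  obtain ⟨l₁, l₂, u, v, -, rfl, rfl⟩ := h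
  exact (List.Perm.swap v u l₂).append_left l₁

theorem alike_triple_iff {S : List α} :
    Alike [x, y, z] S ↔ x ≠ y ∧ S = [y, x, z] ∨ y ≠ z ∧ S = [x, z, y] := by
  constructor
  · rintro ⟨l₁, l₂, u, v, huv, h, rfl⟩
    rcases l₁ with _ | ⟨w, _ | ⟨w', l⟩⟩
    · simp only [List.nil_append, List.cons.injEq] at h
      obtain ⟨rfl, rfl, rfl⟩ := h
      exact .inl ⟨huv, rfl⟩
    · simp only [List.cons_append, List.nil_append, List.cons.injEq] at h
      obtain ⟨rfl, rfl, rfl, rfl⟩ := h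
      exact .inr ⟨huv, rfl⟩
    · have := congrArg List.length h
      simp at this
      omega
  · rintro (⟨h, rfl⟩ | ⟨h, rfl⟩)
    · exact ⟨[], [z], x, y, h, rfl, rfl⟩
    · exact ⟨[x], [], y, z, h, rfl, rfl⟩

theorem not_alike_triple_reverse (hxz : x ≠ z) : ¬ Alike [x, y, z] [z, y, x] := by
  intro h
  rcases alike_triple_iff.mp h with ⟨-, h⟩ | ⟨-, h⟩ <;> simp_all [eq_comm]

theorem not_alike_alike_triple_reverse (hxy : x ≠ y) (hxz : x ≠ z) (hyz : y ≠ z) {S : List α}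
    (h₁ : Alike [x, y, z] S) (h₂ : Alike S [z, y, x]) : False := by
  rcases alike_triple_iff.mp h₁ with ⟨-, rfl⟩ | ⟨-, rfl⟩ <;>
    rcases alike_triple_iff.mp h₂.symm with ⟨-, h⟩ | ⟨-, h⟩ <;>
    simp_all [eq_comm]

theorem alike_chain_triple_reverse (hxy : x ≠ y) (hxz : x ≠ z) (hyz : y ≠ z) {S₁ S₂ : List α}
    (h₁ : Alike [x, y, z] S₁) (h₂ : Alike S₁ S₂) (h₃ : Alike S₂ [z, y, x]) :
    S₁ = [y, x, z] ∧ S₂ = [y, z, x] ∨ S₁ = [x, z, y] ∧ S₂ = [z, x, y] := by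
  rcases alike_triple_iff.mp h₁ with ⟨-, rfl⟩ | ⟨-, rfl⟩ <;>
    rcases alike_triple_iff.mp h₃.symm with ⟨-, rfl⟩ | ⟨-, rfl⟩ <;>
    simp_all [alike_triple_iff, eq_comm]

end Alike

section LinearOrders

variable [DecidableEq α] {A S : Finset α} {l : List α}

theorem IsLinOrd.perm_s17 {l' : List α} (h : IsLinOrd A l) (hl : l.Perm l') : IsLinOrd A l' :=
  ⟨hl.nodup_iff.mp h.1, (List.toFinset_eq_of_perm _ _ hl).symm.trans h.2⟩

theorem IsLinOrd.length_eq_card (h : IsLinOrd A l) : l.length = A.card := by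
  rw [← h.2, List.toFinset_card_of_nodup h.1]

theorem IsLinOrd.restrict (h : IsLinOrd A l) (hS : S ⊆ A) :
    IsLinOrd S (restrictOrd l S) := by
  refine ⟨h.1.filter _, ?_⟩
  ext w
  simp only [restrictOrd, List.toFinset_filter, Finset.mem_filter, decide_eq_true_eq, h.2,
    and_iff_right_iff_imp]
  exact fun hw => hS hw

theorem restrictOrd_eq_self (h : IsLinOrd S l) : restrictOrd l S = l :=
  List.filter_eq_self.mpr fun w hw => by simpa [← h.2] using hw

theorem restrictDom_eq_self {E : Set (List α)} (hE : ∀ l ∈ E, IsLinOrd S l) :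
    restrictDom E S = E := by
  ext l
  constructor
  · rintro ⟨l, hl, rfl⟩
    simpa only [restrictOrd_eq_self (hE l hl)] using hl
  · exact fun hl => ⟨l, hl, restrictOrd_eq_self (hE l hl)⟩

theorem isLinOrd_of_mem_restrictDom {D : Set (List α)} (hD : ∀ l ∈ D, IsLinOrd A l)
    (hS : S ⊆ A) (hl : l ∈ restrictDom D S) : IsLinOrd S l := by
  obtain ⟨l, hl, rfl⟩ := hl
  exact (hD l hl).restrict hS

theorem isPathOn_cons_of_isChain {P : List (List α)} (hl : IsLinOrd A l)
    (hP : (l :: P).IsChain Alike) : IsPathOn A (l :: P) :=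
  ⟨List.cons_ne_nil _ _, hP.induction _ _ (fun _ _ h h' => h'.perm_s17 h.perm_s17) (fun _ => hl), hP⟩

end LinearOrders

/-- The two reversals of `[x, y, z]` by adjacent swaps: along `reversalViaTop` the middle
alternative `y` passes through the top, along `reversalViaBottom` through the bottom. -/
def reversalViaTop (x y z : α) : List (List α) := [[x, y, z], [y, x, z], [y, z, x], [z, y, x]]

def reversalViaBottom (x y z : α) : List (List α) := [[x, y, z], [x, z, y], [z, x, y], [z, y, x]]

theorem reversalViaTop_ne_reversalViaBottom {x y z : α} (hxy : x ≠ y) :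
    reversalViaTop x y z ≠ reversalViaBottom x y z := by
  simp [reversalViaTop, reversalViaBottom, Ne.symm hxy]

section Reversal

variable [DecidableEq α] {A : Finset α} {x y z : α}

theorem IsLinOrd.distinct_triple (h : IsLinOrd A [x, y, z]) : x ≠ y ∧ x ≠ z ∧ y ≠ z := by
  simpa [and_assoc] using h.1

theorem isPath_reversalViaTop (hR : IsLinOrd A [x, y, z]) :
    IsPath A (reversalViaTop x y z) [x, y, z] [z, y, x] := by
  obtain ⟨hxy, hxz, hyz⟩ := hR.distinct_triple
  refine ⟨isPathOn_cons_of_isChain hR ?_, rfl, rfl⟩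
  simp [List.isChain_cons_cons, alike_triple_iff, *]

theorem isPath_reversalViaBottom (hR : IsLinOrd A [x, y, z]) :
    IsPath A (reversalViaBottom x y z) [x, y, z] [z, y, x] := by
  obtain ⟨hxy, hxz, hyz⟩ := hR.distinct_triple
  refine ⟨isPathOn_cons_of_isChain hR ?_, rfl, rfl⟩
  simp [List.isChain_cons_cons, alike_triple_iff, *]

theorem IsPath.four_le_length_of_reverse (hxy : x ≠ y) (hxz : x ≠ z) (hyz : y ≠ z)
    {Q : List (List α)} (hQ : IsPath A Q [x, y, z] [z, y, x]) : 4 ≤ Q.length := by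
  obtain ⟨⟨-, -, hchain : List.IsChain Alike _⟩, hhead, hlast⟩ := hQ
  rcases Q with _ | ⟨q₀, _ | ⟨q₁, _ | ⟨q₂, _ | ⟨q₃, Q⟩⟩⟩⟩
  · simp at hhead
  · simp only [List.head?_cons, List.getLast?_singleton, Option.some.injEq] at hhead hlast
    simp_all
  · simp only [List.head?_cons, Option.some.injEq] at hhead
    obtain rfl : q₁ = [z, y, x] := by simpa [List.getLast?] using hlast
    subst hhead
    simp only [List.isChain_cons_cons, List.isChain_singleton, and_true] at hchain
    exact absurd hchain (not_alike_triple_reverse hxz)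
  · simp only [List.head?_cons, Option.some.injEq] at hhead
    obtain rfl : q₂ = [z, y, x] := by simpa [List.getLast?] using hlast
    subst hhead
    simp only [List.isChain_cons_cons, List.isChain_singleton, and_true] at hchain
    exact (not_alike_alike_triple_reverse hxy hxz hyz hchain.1 hchain.2).elim
  · simp

theorem IsPath.eq_reversal_of_length_eq_four (hxy : x ≠ y) (hxz : x ≠ z) (hyz : y ≠ z)
    {Q : List (List α)} (hQ : IsPath A Q [x, y, z] [z, y, x]) (hlen : Q.length = 4) :
    Q = reversalViaTop x y z ∨ Q = reversalViaBottom x y z := by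
  obtain ⟨⟨-, -, hchain : List.IsChain Alike _⟩, hhead, hlast⟩ := hQ
  obtain ⟨q₀, q₁, q₂, q₃, rfl⟩ := List.length_eq_four.mp hlen
  simp only [List.head?_cons, Option.some.injEq] at hhead
  obtain rfl : q₃ = [z, y, x] := by simpa [List.getLast?] using hlast
  subst hhead
  simp only [List.isChain_cons_cons, List.isChain_singleton, and_true] at hchain
  obtain ⟨h₁, h₂, h₃⟩ := hchain
  rcases alike_chain_triple_reverse hxy hxz hyz h₁ h₂ h₃ with ⟨rfl, rfl⟩ | ⟨rfl, rfl⟩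
  exacts [.inl rfl, .inr rfl]

theorem isGeodesic_reversalViaTop (hR : IsLinOrd A [x, y, z]) :
    IsGeodesic A (reversalViaTop x y z) [x, y, z] [z, y, x] := by
  obtain ⟨hxy, hxz, hyz⟩ := hR.distinct_triple
  exact ⟨isPath_reversalViaTop hR, fun _ hQ => hQ.four_le_length_of_reverse hxy hxz hyz⟩

theorem isGeodesic_reversalViaBottom (hR : IsLinOrd A [x, y, z]) :
    IsGeodesic A (reversalViaBottom x y z) [x, y, z] [z, y, x] := by
  obtain ⟨hxy, hxz, hyz⟩ := hR.distinct_triple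
  exact ⟨isPath_reversalViaBottom hR, fun _ hQ => hQ.four_le_length_of_reverse hxy hxz hyz⟩

theorem IsGeodesic.eq_reversalViaTop_or_eq_reversalViaBottom (hR : IsLinOrd A [x, y, z])
    {Q : List (List α)} (hQ : IsGeodesic A Q [x, y, z] [z, y, x]) :
    Q = reversalViaTop x y z ∨ Q = reversalViaBottom x y z := by
  obtain ⟨hxy, hxz, hyz⟩ := hR.distinct_triple
  refine hQ.1.eq_reversal_of_length_eq_four hxy hxz hyz (le_antisymm ?_ ?_)
  exacts [hQ.2 _ (isPath_reversalViaTop hR), hQ.1.four_le_length_of_reverse hxy hxz hyz]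

end Reversal

section NeverConditions

variable {E F : Set (List α)} {w x y z : α}

theorem NeverCond.union {k : Fin 3} (hE : NeverCond E w k) (hF : NeverCond F w k) :
    NeverCond (E ∪ F) w k := by
  rintro l (hl | hl)
  exacts [hE l hl, hF l hl]

theorem neverCond_reversalViaTop (hxy : x ≠ y) (hyz : y ≠ z) :
    NeverCond {l | l ∈ reversalViaTop x y z} y 2 := by
  simp [NeverCond, reversalViaTop, hxy, hyz.symm]

theorem neverCond_reversalViaBottom (hxy : x ≠ y) (hyz : y ≠ z) :
    NeverCond {l | l ∈ reversalViaBottom x y z} y 0 := by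
  simp [NeverCond, reversalViaBottom, hxy, hyz.symm]

theorem eq_of_neverCond_of_reverse_mem (hw : w ∈ [x, y, z]) (hR : [x, y, z] ∈ E)
    (hT : [z, y, x] ∈ E) (h : NeverCond E w 0 ∨ NeverCond E w 2) : w = y := by
  simp only [List.mem_cons, List.not_mem_nil, or_false] at hw
  rcases h with h | h <;> have hR' := h _ hR <;> have hT' := h _ hT <;> simp at hR' hT' <;>
    grind

theorem isPeakPitDomain_triple [DecidableEq α] {a b c : α}
    (hE : ∀ l ∈ E, IsLinOrd {a, b, c} l) (hw : w ∈ ({a, b, c} : Finset α))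
    (h : NeverCond E w 0 ∨ NeverCond E w 2) : IsPeakPitDomain {a, b, c} E := by
  refine ⟨hE, fun a' b' c' ha' hb' hc' hab hac hbc => ?_⟩
  have htriple : ({a', b', c'} : Finset α) = {a, b, c} := by
    refine Finset.eq_of_subset_of_card_le (by simp [Finset.insert_subset_iff, *]) ?_
    rw [Finset.card_eq_three.mpr ⟨a', b', c', hab, hac, hbc, rfl⟩]
    exact Finset.card_le_three
  rw [htriple, restrictDom_eq_self hE]
  exact ⟨w, hw, h⟩

end NeverConditions

/-- Let `D ⊆ L(A)` be a peak-pit Condorcet domain, `a,b,c ∈ A`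
distinct, and `R, T ∈ D_{{a,b,c}}` differ by three swaps of adjacent
alternatives (i.e. `T` is the reverse of `R`).  Then there are exactly two
geodesics on `L({a,b,c})` connecting `R` and `T`, and for at least one of them,
`𝒜`, the domain `D_{{a,b,c}} ∪ K(𝒜)` is a peak-pit Condorcet domain. -/
theorem two_geodesics_on_triple [DecidableEq α] (A : Finset α)
    (D : Set (List α)) (hD : IsPeakPitDomain A D) (a b c : α)
    (ha : a ∈ A) (hb : b ∈ A) (hc : c ∈ A)
    (hab : a ≠ b) (hac : a ≠ c) (hbc : b ≠ c)
    (R T : List α) (hR : R ∈ restrictDom D {a, b, c})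
    (hT : T ∈ restrictDom D {a, b, c}) (hrev : T = R.reverse) :
    ∃ P₁ P₂ : List (List α), P₁ ≠ P₂ ∧
      IsGeodesic {a, b, c} P₁ R T ∧ IsGeodesic {a, b, c} P₂ R T ∧
      (∀ Q : List (List α), IsGeodesic {a, b, c} Q R T → Q = P₁ ∨ Q = P₂) ∧
      (IsPeakPitDomain {a, b, c} (restrictDom D {a, b, c} ∪ {l | l ∈ P₁}) ∨
        IsPeakPitDomain {a, b, c} (restrictDom D {a, b, c} ∪ {l | l ∈ P₂})) := by
  have hE : ∀ l ∈ restrictDom D {a, b, c}, IsLinOrd {a, b, c} l := fun _ =>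
    isLinOrd_of_mem_restrictDom hD.1 (by simp [Finset.insert_subset_iff, *])
  have hRlin := hE R hR
  obtain ⟨x, y, z, rfl⟩ := List.length_eq_three.mp <|
    hRlin.length_eq_card.trans (Finset.card_eq_three.mpr ⟨a, b, c, hab, hac, hbc, rfl⟩)
  obtain ⟨hxy, -, hyz⟩ := hRlin.distinct_triple
  obtain rfl : T = [z, y, x] := hrev
  refine ⟨_, _, reversalViaTop_ne_reversalViaBottom hxy, isGeodesic_reversalViaTop hRlin,
    isGeodesic_reversalViaBottom hRlin,
    fun Q hQ => hQ.eq_reversalViaTop_or_eq_reversalViaBottom hRlin, ?_⟩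
  obtain ⟨w, hw, hnever⟩ := hD.2 a b c ha hb hc hab hac hbc
  obtain rfl : w = y :=
    eq_of_neverCond_of_reverse_mem (List.mem_toFinset.mp (hRlin.2 ▸ hw)) hR hT hnever
  rcases hnever with hnotTop | hnotBottom
  · refine .inr (isPeakPitDomain_triple ?_ hw (.inl (hnotTop.union
      (neverCond_reversalViaBottom hxy hyz))))
    exact fun l hl => hl.elim (hE l) ((isPath_reversalViaBottom hRlin).1.2.1 l)
  · refine .inl (isPeakPitDomain_triple ?_ hw (.inr (hnotBottom.union
      (neverCond_reversalViaTop hxy hyz))))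
    exact fun l hl => hl.elim (hE l) ((isPath_reversalViaTop hRlin).1.2.1 l)
end
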